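/- Let S be a densely defined, closed, symmetric operator with S ≥ εI, ε > 0, and let v ∈ dom(S_K). Then v decomposes as v = (S_F)⁻¹ S_K v + w with (S_F)⁻¹ S_K v ∈ dom(S) and w ∈ ker(S*). Consequently the reduced Krein–von Neumann operator satisfies (Ŝ_K)⁻¹ = (I − P) (S_F)⁻¹ (I − P), where P is the orthogonal projection onto ker(S_K). -/

import Mathlib

/-!
Both `S_F` and `S_K` extend `S`, and `S_K`, being contained in `S*`, vanishes on `ker S*`
(tested against the dense set `dom S`). Hence `S_K (u + k) = S u` on
`dom S_K = dom S ∔ ker S*`, and `(S_F)⁻¹ S u = u` recovers the `dom S` component.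
The lower bound makes the closed operator `S` bounded below, so its range is closed and
`(ker S*)ᗮ = ran S`. For `x = S u`, split `u = w + z` with `w ∈ ker S*`, `z ∈ (ker S*)ᗮ`:
then `z = (S_F)⁻¹ x - w` and `S_K z = S u = x`.
-/

open scoped ComplexInnerProductSpace
open Filter

noncomputable section

variable {H : Type*} [NormedAddCommGroup H] [InnerProductSpace ℂ H] [CompleteSpace H]

/-- The kernel of the adjoint `S*` of a densely defined operator `S`,
described as `{v | ∀ u ∈ dom S, ⟪S u, v⟫ = 0}`. -/
def adjKerD (S : H →ₗ.[ℂ] H) : Submodule ℂ H where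
  carrier := {v | ∀ u : S.domain, ⟪S u, v⟫ = 0}
  add_mem' := by
    intro a b ha hb u
    rw [inner_add_right, ha u, hb u, add_zero]
  zero_mem' := by
    intro u; exact inner_zero_right _
  smul_mem' := by
    intro c a ha u
    rw [inner_smul_right, ha u, mul_zero]

theorem mul_norm_le_norm_of_le_re_inner {𝕜 E : Type*} [RCLike 𝕜] [NormedAddCommGroup E]
    [InnerProductSpace 𝕜 E] {ε : ℝ} {x y : E} (h : ε * ‖x‖ ^ 2 ≤ RCLike.re (inner 𝕜 x y)) :
    ε * ‖x‖ ≤ ‖y‖ := by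
  have hxy : ε * ‖x‖ ^ 2 ≤ ‖x‖ * ‖y‖ :=
    h.trans ((RCLike.re_le_norm _).trans (norm_inner_le_norm x y))
  rcases (norm_nonneg x).eq_or_lt with hx | hx
  · simp [← hx]
  · nlinarith

theorem LinearPMap.isClosed_range_of_mul_norm_le {𝕜 E F : Type*} [NontriviallyNormedField 𝕜]
    [NormedAddCommGroup E] [NormedSpace 𝕜 E] [CompleteSpace E]
    [NormedAddCommGroup F] [NormedSpace 𝕜 F] [CompleteSpace F]
    {T : E →ₗ.[𝕜] F} (hT : T.IsClosed) {c : ℝ} (hc : 0 < c)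
    (h : ∀ x : T.domain, c * ‖(x : E)‖ ≤ ‖T x‖) : _root_.IsClosed (Set.range T) := by
  have : CompleteSpace T.graph := _root_.IsClosed.completeSpace_coe (hs := hT)
  let π : T.graph →L[𝕜] F := (ContinuousLinearMap.snd 𝕜 E F).comp T.graph.subtypeL
  have hπ : Set.range π = Set.range T := by
    ext y
    simp [π]
  have hanti : AntilipschitzWith (c⁻¹ + 1).toNNReal π := by
    refine π.antilipschitz_of_bound fun ⟨⟨x, y⟩, hp⟩ => ?_
    obtain ⟨z, rfl, rfl⟩ := (T.mem_graph_iff).1 hp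
    have hz : ‖(z : E)‖ ≤ c⁻¹ * ‖T z‖ := by
      rw [le_inv_mul_iff₀ hc]; exact h z
    change max ‖(z : E)‖ ‖T z‖ ≤ ((c⁻¹ + 1).toNNReal : ℝ) * ‖T z‖
    rw [Real.coe_toNNReal _ (by positivity)]
    refine max_le (hz.trans ?_) ?_ <;> nlinarith [norm_nonneg (T z), inv_pos.2 hc]
  exact hπ ▸ hanti.isClosed_range π.uniformContinuous

section AdjointKernel

variable {E : Type*} [NormedAddCommGroup E] [InnerProductSpace ℂ E] {S T : E →ₗ.[ℂ] E}

theorem adjKerD_eq_orthogonal_range : adjKerD S = (LinearMap.range S.toFun)ᗮ := by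
  ext v
  simp only [Submodule.mem_orthogonal, LinearMap.mem_range, forall_exists_index,
    forall_apply_eq_imp_iff]
  rfl

theorem orthogonal_adjKerD [CompleteSpace E] (hS : IsClosed (Set.range S)) :
    (adjKerD S)ᗮ = LinearMap.range S.toFun := by
  rw [adjKerD_eq_orthogonal_range, Submodule.orthogonal_orthogonal_eq_closure]
  exact hS.submodule_topologicalClosure_eq

theorem LinearPMap.apply_eq_zero_of_mem_adjKerD (hdense : Dense (S.domain : Set E))
    (hadj : ∀ (v : T.domain) (u : S.domain), ⟪S u, (v : E)⟫ = ⟪(u : E), T v⟫)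
    (v : T.domain) (hv : (v : E) ∈ adjKerD S) : T v = 0 :=
  hdense.eq_zero_of_inner_right ℂ fun u hu => (hadj v ⟨u, hu⟩).symm.trans (hv ⟨u, hu⟩)

theorem LinearPMap.apply_eq_of_sub_mem_adjKerD (hdense : Dense (S.domain : Set E)) (hST : S ≤ T)
    (hadj : ∀ (v : T.domain) (u : S.domain), ⟪S u, (v : E)⟫ = ⟪(u : E), T v⟫)
    (v : T.domain) (u : S.domain) (hvu : (v : E) - u ∈ adjKerD S) : T v = S u := by
  have hsplit : v = ⟨u, hST.1 u.2⟩ + ⟨v - u, sub_mem v.2 (hST.1 u.2)⟩ :=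
    Subtype.ext (add_sub_cancel _ _).symm
  rw [hsplit, T.map_add,
    LinearPMap.apply_eq_zero_of_mem_adjKerD hdense hadj ⟨(v : E) - u, _⟩ hvu, add_zero]
  exact (hST.2 rfl).symm

end AdjointKernel

theorem stmt_5_general (S S_F S_K : H →ₗ.[ℂ] H)
    (hdense : Dense (S.domain : Set H))
    (hclosed : S.IsClosed)
    (ε : ℝ) (hε : 0 < ε)
    (hbound : ∀ u : S.domain, ε * ‖(u : H)‖ ^ 2 ≤ (⟪(u : H), S u⟫).re)
    (hFext : S ≤ S_F)
    (hKext : S ≤ S_K)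
    (hKadj : ∀ (v : S_K.domain) (u : S.domain), ⟪S u, (v : H)⟫ = ⟪(u : H), S_K v⟫)
    (hdomK : S_K.domain = S.domain ⊔ adjKerD S)
    -- `Finv = (S_F)⁻¹ ∈ B(H)`:
    (Finv : H →L[ℂ] H)
    (hFinv2 : ∀ v : S_F.domain, Finv (S_F v) = (v : H)) :
    -- the decomposition `v = (S_F)⁻¹ S_K v + w`, `w ∈ ker S*`:
    (∀ v : S_K.domain, Finv (S_K v) ∈ S.domain ∧ ((v : H) - Finv (S_K v)) ∈ adjKerD S) ∧
    -- `(Ŝ_K)⁻¹ = (I − P)(S_F)⁻¹(I − P)`: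
    (∀ x : H, x ∈ (adjKerD S)ᗮ →
      ∃ w ∈ adjKerD S, (Finv x - w) ∈ (adjKerD S)ᗮ ∧
        ∃ hmem : Finv x - w ∈ S_K.domain, S_K ⟨Finv x - w, hmem⟩ = x) := by
  have hFinvS (u : S.domain) : Finv (S u) = u := by
    rw [hFext.2 (y := ⟨u, hFext.1 u.2⟩) rfl, hFinv2]
  have hSK := LinearPMap.apply_eq_of_sub_mem_adjKerD hdense hKext hKadj
  refine ⟨fun v => ?_, fun x hx => ?_⟩
  · obtain ⟨u, hu, k, hk, huk⟩ :=
      Submodule.mem_sup.1 (hdomK ▸ v.2 : (v : H) ∈ S.domain ⊔ adjKerD S)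
    have hvu : (v : H) - u ∈ adjKerD S := by rwa [← huk, add_sub_cancel_left]
    rw [hSK v ⟨u, hu⟩ hvu, hFinvS]
    exact ⟨hu, hvu⟩
  · have hrange : IsClosed (Set.range S) :=
      LinearPMap.isClosed_range_of_mul_norm_le hclosed hε fun u =>
        mul_norm_le_norm_of_le_re_inner (𝕜 := ℂ) (hbound u)
    obtain ⟨u, hux⟩ := (orthogonal_adjKerD hrange ▸ hx : x ∈ LinearMap.range S.toFun)
    have hFx : Finv x = u := by rw [← hux]; exact hFinvS u
    have : CompleteSpace (adjKerD S) := by rw [adjKerD_eq_orthogonal_range]; infer_instance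
    obtain ⟨w, hw, z, hz, hwz⟩ := (adjKerD S).exists_add_mem_mem_orthogonal (u : H)
    rw [hFx]
    refine ⟨w, hw, by rwa [hwz, add_sub_cancel_left],
      sub_mem (hKext.1 u.2) (hdomK ▸ Submodule.mem_sup_right hw), ?_⟩
    rw [hSK _ u (by simpa using neg_mem hw)]
    exact hux

/-- Lemma 2.9: Let `S` be densely defined, closed, symmetric with
`S ≥ ε·I`, `ε > 0`, with Friedrichs extension `S_F` (invertible, bounded inverse
`Finv = (S_F)⁻¹ ∈ B(H)`) and Krein–von Neumann extension `S_K`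
(`dom S_K = dom S ∔ ker S*`, `ker S_K = ker S*`). Then every `v ∈ dom S_K` decomposes as
`v = (S_F)⁻¹ S_K v + w` with `(S_F)⁻¹ S_K v ∈ dom S` and `w ∈ ker S*`; consequently the
reduced Krein–von Neumann operator satisfies `(Ŝ_K)⁻¹ = (I − P) (S_F)⁻¹ (I − P)`, where
`P` is the orthogonal projection onto `ker S_K`: for every `x ∈ (ker S*)ᗮ` there is
`w ∈ ker S*` with `(S_F)⁻¹ x − w ∈ (ker S*)ᗮ ∩ dom S_K` (this element is
`(I − P)(S_F)⁻¹ x`) and `S_K ((S_F)⁻¹ x − w) = x`. -/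
theorem stmt_5 (S S_F S_K : H →ₗ.[ℂ] H)
    (hdense : Dense (S.domain : Set H))
    (hclosed : S.IsClosed)
    (hsym : ∀ u v : S.domain, ⟪S u, (v : H)⟫ = ⟪(u : H), S v⟫)
    (ε : ℝ) (hε : 0 < ε)
    (hbound : ∀ u : S.domain, ε * ‖(u : H)‖ ^ 2 ≤ (⟪(u : H), S u⟫).re)
    (hFext : S ≤ S_F)
    (hFadj : ∀ (v : S_F.domain) (u : S.domain), ⟪S u, (v : H)⟫ = ⟪(u : H), S_F v⟫)
    (hFbound : ∀ v : S_F.domain, ε * ‖(v : H)‖ ^ 2 ≤ (⟪(v : H), S_F v⟫).re)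
    (hKext : S ≤ S_K)
    (hKadj : ∀ (v : S_K.domain) (u : S.domain), ⟪S u, (v : H)⟫ = ⟪(u : H), S_K v⟫)
    (hdomK : S_K.domain = S.domain ⊔ adjKerD S)
    -- `Finv = (S_F)⁻¹ ∈ B(H)`:
    (Finv : H →L[ℂ] H)
    (hFinvmem : ∀ x : H, Finv x ∈ S_F.domain)
    (hFinv1 : ∀ x : H, S_F ⟨Finv x, hFinvmem x⟩ = x)
    (hFinv2 : ∀ v : S_F.domain, Finv (S_F v) = (v : H)) :
    -- the decomposition `v = (S_F)⁻¹ S_K v + w`, `w ∈ ker S*`: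
    (∀ v : S_K.domain, Finv (S_K v) ∈ S.domain ∧ ((v : H) - Finv (S_K v)) ∈ adjKerD S) ∧
    -- `(Ŝ_K)⁻¹ = (I − P)(S_F)⁻¹(I − P)`:
    (∀ x : H, x ∈ (adjKerD S)ᗮ →
      ∃ w ∈ adjKerD S, (Finv x - w) ∈ (adjKerD S)ᗮ ∧
        ∃ hmem : Finv x - w ∈ S_K.domain, S_K ⟨Finv x - w, hmem⟩ = x) :=
  stmt_5_general S S_F S_K hdense hclosed ε hε hbound hFext hKext hKadj hdomK Finv hFinv2
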